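/- arXiv:2507.19868 — 3 statements merged into one kernel-verified Lean document; each statement's English description precedes it below -/
import Mathlib

section
/- Let n ≥ 3 and let w_{ij} > 0 for all 1 ≤ i ≠ j ≤ n. Let V be the (2n−1)×(2n−1) matrix with V_{ii} = (n−1)^{-1} Σ_{j≠i} w_{ij} for i ∈ {1,…,n}; V_{n+j,n+j} = (n−1)^{-1} Σ_{i≠j} w_{ij} for j ∈ {1,…,n−1}; V_{i,n+j} = V_{n+j,i} = (n−1)^{-1} w_{ij} for i ∈ {1,…,n}, j ∈ {1,…,n−1} with i ≠ j; and all other entries 0. Then V is symmetric positive definite; in particular V is invertible. -/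
/-!
Index the rows of a matrix `B` by the ordered pairs `(i, j)`, `i ≠ j`, and give the row of
`(i, j)` the entries `1` in the columns `α_i` and `β_j` (no second entry when `j = n`, which is how
`β_n ≡ 0` enters). Then `V = (n - 1)⁻¹ • Bᵀ D B` with `D = diag (w i j)` positive definite, so `V`
is positive definite as soon as `B` is injective. If `B (a, b) = 0`, i.e. `a_i + b_j = 0` for all
`i ≠ j` with `b_n = 0`, then `a_i = 0` for `i ≠ n`; a third index `i ∉ {j, n}`, which exists as
`n ≥ 3`, gives `b_j = 0`, and finally `a_n = 0`.
-/

open Matrix Finset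

variable {ι κ : Type*} [Fintype ι] [DecidableEq ι]

abbrev DistinctPairs (ι : Type*) := {p : ι × ι // p.1 ≠ p.2}

lemma sum_distinctPairs {M : Type*} [AddCommMonoid M] (f : ι → ι → M) :
    ∑ p : DistinctPairs ι, f p.1.1 p.1.2 = ∑ i, ∑ j ∈ univ.erase i, f i j := by
  rw [← sum_subtype univ.offDiag (by simp) (fun p : ι × ι => f p.1 p.2)]
  exact sum_finset_product' _ _ _ (by simp [and_comm, ne_comm])

lemma sum_distinctPairs' {M : Type*} [AddCommMonoid M] (f : ι → ι → M) :
    ∑ p : DistinctPairs ι, f p.1.1 p.1.2 = ∑ j, ∑ i ∈ univ.erase j, f i j := by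
  rw [← sum_subtype univ.offDiag (by simp) (fun p : ι × ι => f p.1 p.2)]
  exact sum_finset_product_right' _ _ _ (by simp [and_comm])

def pairRow (c : κ ↪ ι) (i j : ι) : ι ⊕ κ → ℝ :=
  Sum.elim (Pi.single i 1) (Pi.single j 1 ∘ c)

def pairIncidence (c : κ ↪ ι) : Matrix (DistinctPairs ι) (ι ⊕ κ) ℝ :=
  of fun p => pairRow c p.1.1 p.1.2

def pairGram (c : κ ↪ ι) (w : ι → ι → ℝ) : Matrix (ι ⊕ κ) (ι ⊕ κ) ℝ :=
  (pairIncidence c)ᵀ * Matrix.diagonal (fun p : DistinctPairs ι => w p.1.1 p.1.2) *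
    pairIncidence c

section pairGram

variable (c : κ ↪ ι) (w : ι → ι → ℝ)

lemma pairGram_apply (r s : ι ⊕ κ) :
    pairGram c w r s = ∑ i, ∑ j ∈ univ.erase i, pairRow c i j r * w i j * pairRow c i j s := by
  rw [pairGram, mul_apply]
  simp only [mul_diagonal, transpose_apply, pairIncidence, of_apply]
  exact sum_distinctPairs (fun i j => pairRow c i j r * w i j * pairRow c i j s)

lemma pairGram_apply' (r s : ι ⊕ κ) :
    pairGram c w r s = ∑ j, ∑ i ∈ univ.erase j, pairRow c i j r * w i j * pairRow c i j s := by
  rw [pairGram, mul_apply]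
  simp only [mul_diagonal, transpose_apply, pairIncidence, of_apply]
  exact sum_distinctPairs' (fun i j => pairRow c i j r * w i j * pairRow c i j s)

lemma pairGram_isSymm : (pairGram c w).IsSymm := by
  simp [pairGram, IsSymm, transpose_mul, Matrix.mul_assoc]

lemma pairGram_inl_inl (i i' : ι) :
    pairGram c w (.inl i) (.inl i') = if i = i' then ∑ j ∈ univ.erase i, w i j else 0 := by
  rcases eq_or_ne i i' with rfl | h <;> simp [pairGram_apply, pairRow, Pi.single_apply, *]

lemma pairGram_inr_inr [DecidableEq κ] (k k' : κ) :
    pairGram c w (.inr k) (.inr k') =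
      if k = k' then ∑ i ∈ univ.erase (c k), w i (c k) else 0 := by
  rcases eq_or_ne k k' with rfl | h <;> simp [pairGram_apply', pairRow, Pi.single_apply, *]

lemma pairGram_inl_inr (i : ι) (k : κ) :
    pairGram c w (.inl i) (.inr k) = if i = c k then 0 else w i (c k) := by
  rcases eq_or_ne i (c k) with rfl | h <;> simp [pairGram_apply', pairRow, Pi.single_apply, *]

lemma pairGram_inr_inl (i : ι) (k : κ) :
    pairGram c w (.inr k) (.inl i) = if i = c k then 0 else w i (c k) := by
  rw [(pairGram_isSymm c w).apply, pairGram_inl_inr]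

end pairGram

variable (c : κ ↪ ι)

lemma pairRow_dotProduct [Fintype κ] (i j : ι) (x : ι ⊕ κ → ℝ) :
    pairRow c i j ⬝ᵥ x = x (.inl i) + Function.extend c (x ∘ .inr) 0 j := by
  classical
  by_cases hj : ∃ k, c k = j
  · obtain ⟨k, rfl⟩ := hj
    simp [pairRow, dotProduct, Fintype.sum_sum_type, Pi.single_apply, c.injective.extend_apply]
  · simp only [not_exists] at hj
    simp [pairRow, dotProduct, Fintype.sum_sum_type, Pi.single_apply, Function.extend_apply', hj]

lemma eq_zero_of_add_extend_eq_zero {a : ι → ℝ} {b : κ → ℝ} {j₀ : ι} (hj₀ : j₀ ∉ Set.range c)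
    (hι : 3 ≤ Fintype.card ι) (h : ∀ i j, i ≠ j → a i + Function.extend c b 0 j = 0) :
    a = 0 ∧ b = 0 := by
  have ha : ∀ i, i ≠ j₀ → a i = 0 := fun i hi => by
    simpa [Function.extend_apply' _ _ _ (fun ⟨k, hk⟩ => hj₀ ⟨k, hk⟩)] using h i j₀ hi
  have hb : b = 0 := funext fun k => by
    obtain ⟨i, -, hi⟩ := exists_mem_notMem_of_card_lt_card (s := {c k, j₀}) (t := univ)
      (card_le_two.trans_lt (by rw [card_univ]; omega))
    obtain ⟨hik, hij₀⟩ : i ≠ c k ∧ i ≠ j₀ := by simpa [not_or] using hi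
    simpa [ha i hij₀, c.injective.extend_apply] using h i (c k) hik
  refine ⟨funext fun i => ?_, hb⟩
  obtain ⟨j, hij⟩ := Fintype.exists_ne_of_one_lt_card (by omega) i
  simpa [hb, Function.extend_zero] using h i j (Ne.symm hij)

lemma pairIncidence_mulVec_injective [Fintype κ] {j₀ : ι} (hj₀ : j₀ ∉ Set.range c)
    (hι : 3 ≤ Fintype.card ι) : Function.Injective (pairIncidence c).mulVec := by
  rw [← coe_mulVecLin, ← LinearMap.ker_eq_bot]
  refine ker_mulVecLin_eq_bot_iff.2 fun x hx => ?_
  obtain ⟨ha, hb⟩ := eq_zero_of_add_extend_eq_zero c hj₀ hι (a := x ∘ .inl) (b := x ∘ .inr)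
    fun i j hij => by
      rw [Function.comp_apply, ← pairRow_dotProduct]
      exact congrFun hx ⟨(i, j), hij⟩
  rw [← Sum.elim_comp_inl_inr x, ha, hb, Sum.elim_zero_zero]

lemma pairGram_posDef [Fintype κ] {w : ι → ι → ℝ} (hw : ∀ i j, i ≠ j → 0 < w i j) {j₀ : ι}
    (hj₀ : j₀ ∉ Set.range c) (hι : 3 ≤ Fintype.card ι) : (pairGram c w).PosDef := by
  have hD : (Matrix.diagonal fun p : DistinctPairs ι => w p.1.1 p.1.2).PosDef :=
    .diagonal fun p => hw _ _ p.2
  simpa [pairGram, conjTranspose_eq_transpose_of_trivial] using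
    hD.conjTranspose_mul_mul_same (pairIncidence_mulVec_injective c hj₀ hι)

lemma eq_smul_pairGram [DecidableEq κ] (w : ι → ι → ℝ) {t : ℝ} {V : Matrix (ι ⊕ κ) (ι ⊕ κ) ℝ}
    (h₁ : ∀ i, V (.inl i) (.inl i) = t * ∑ j ∈ univ.erase i, w i j)
    (h₂ : ∀ i i', i ≠ i' → V (.inl i) (.inl i') = 0)
    (h₃ : ∀ k, V (.inr k) (.inr k) = t * ∑ i ∈ univ.erase (c k), w i (c k))
    (h₄ : ∀ k k', k ≠ k' → V (.inr k) (.inr k') = 0)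
    (h₅ : ∀ i k, i ≠ c k →
      V (.inl i) (.inr k) = t * w i (c k) ∧ V (.inr k) (.inl i) = t * w i (c k))
    (h₆ : ∀ i k, i = c k → V (.inl i) (.inr k) = 0 ∧ V (.inr k) (.inl i) = 0) :
    V = t • pairGram c w := by
  ext (i | k) (i' | k')
  · rcases eq_or_ne i i' with rfl | h <;> simp [pairGram_inl_inl, *]
  · by_cases h : i = c k' <;> simp [pairGram_inl_inr, *]
  · by_cases h : i' = c k <;> simp [pairGram_inr_inl, *]
  · rcases eq_or_ne k k' with rfl | h <;> simp [pairGram_inr_inr, *]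

/-- For `n ≥ 3` and positive weights `w i j`, the `(2n-1) × (2n-1)` matrix
`V_{η*η*}` is symmetric positive definite; in particular it is invertible. -/
theorem posdef_V (n : ℕ) (hn : 3 ≤ n) (w : Fin n → Fin n → ℝ)
    (hw : ∀ i j : Fin n, i ≠ j → 0 < w i j)
    (V : Matrix (Fin n ⊕ Fin (n - 1)) (Fin n ⊕ Fin (n - 1)) ℝ)
    (hV₁ : ∀ i : Fin n,
      V (Sum.inl i) (Sum.inl i) = ((n : ℝ) - 1)⁻¹ * ∑ j ∈ Finset.univ.erase i, w i j)
    (hV₂ : ∀ i i' : Fin n, i ≠ i' → V (Sum.inl i) (Sum.inl i') = 0)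
    (hV₃ : ∀ j : Fin (n - 1),
      V (Sum.inr j) (Sum.inr j) = ((n : ℝ) - 1)⁻¹ *
        ∑ i ∈ Finset.univ.erase (Fin.castLE (Nat.sub_le n 1) j),
          w i (Fin.castLE (Nat.sub_le n 1) j))
    (hV₄ : ∀ j j' : Fin (n - 1), j ≠ j' → V (Sum.inr j) (Sum.inr j') = 0)
    (hV₅ : ∀ (i : Fin n) (j : Fin (n - 1)), i ≠ Fin.castLE (Nat.sub_le n 1) j →
      V (Sum.inl i) (Sum.inr j) = ((n : ℝ) - 1)⁻¹ * w i (Fin.castLE (Nat.sub_le n 1) j) ∧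
      V (Sum.inr j) (Sum.inl i) = ((n : ℝ) - 1)⁻¹ * w i (Fin.castLE (Nat.sub_le n 1) j))
    (hV₆ : ∀ (i : Fin n) (j : Fin (n - 1)), i = Fin.castLE (Nat.sub_le n 1) j →
      V (Sum.inl i) (Sum.inr j) = 0 ∧ V (Sum.inr j) (Sum.inl i) = 0) :
    V.PosDef ∧ IsUnit V := by
  let c := Fin.castLEEmb (Nat.sub_le n 1)
  have hlast : (⟨n - 1, by omega⟩ : Fin n) ∉ Set.range c := by
    rintro ⟨k, hk⟩
    have := congrArg Fin.val hk
    simp [c] at this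
    omega
  have hV : V = ((n : ℝ) - 1)⁻¹ • pairGram c w := eq_smul_pairGram c w hV₁ hV₂ hV₃ hV₄ hV₅ hV₆
  have hscale : (0 : ℝ) < ((n : ℝ) - 1)⁻¹ := by
    have : (3 : ℝ) ≤ n := by exact_mod_cast hn
    exact inv_pos.2 (by linarith)
  have hpd : V.PosDef := hV ▸ (pairGram_posDef c hw hlast (by simpa using hn)).smul hscale
  exact ⟨hpd, hpd.isUnit⟩
end

section
/- Let n ≥ 3 and let c_{ij} > 0 for all 1 ≤ i ≠ j ≤ n. Define Φ : ℝ^{2n−1} → ℝ^{2n−1} on points η = (α_1,…,α_n, β_1,…,β_{n−1}), with the convention β_n := 0, by Φ_i(η) = exp(α_i) Σ_{j≠i} c_{ij} exp(β_j) for i ∈ {1,…,n} and Φ_{n+j}(η) = exp(β_j) Σ_{i≠j} c_{ij} exp(α_i) for j ∈ {1,…,n−1}. Then Φ is differentiable everywhere, its Jacobian matrix at every η is symmetric, and it is positive definite: for every η and every nonzero v ∈ ℝ^{2n−1}, ⟨DΦ(η)[v], v⟩ > 0. -/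
open scoped RealInnerProductSpace

open Finset Real

/-!
`Φ` is the gradient of the convex function `η ↦ ∑_{i ≠ j} c i j * exp ⟪g i j, η⟫`, where `g i j`
is the indicator vector of the coordinates `αᵢ` and `βⱼ`. Its Jacobian is the Hessian
`∑_{i ≠ j} c i j * exp ⟪g i j, η⟫ • g i j ⊗ g i j`: symmetric, positive semidefinite, and
definite because no nonzero `v` is orthogonal to every `g i j`. Indeed, orthogonality says
`aᵢ + bⱼ = 0` for all `i ≠ j`, with `bₙ = 0`; with at least three indices this forces `a = b = 0`.
-/

section ExpInnerGrad

variable {ι E : Type*} [NormedAddCommGroup E] [InnerProductSpace ℝ E]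
  (s : Finset ι) (w : ι → ℝ) (g : ι → E)

noncomputable def expInnerGrad (x : E) : E :=
  ∑ p ∈ s, (w p * exp ⟪g p, x⟫) • g p

theorem hasFDerivAt_expInnerGrad (x : E) :
    HasFDerivAt (expInnerGrad s w g)
      (∑ p ∈ s, ((w p * exp ⟪g p, x⟫) • innerSL ℝ (g p)).smulRight (g p)) x := by
  refine HasFDerivAt.fun_sum fun p _ => ?_
  have h := (((innerSL ℝ (g p)).hasFDerivAt (x := x)).exp.const_mul (w p)).smul_const (g p)
  rwa [smul_smul] at h

theorem differentiable_expInnerGrad : Differentiable ℝ (expInnerGrad s w g) :=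
  fun x => (hasFDerivAt_expInnerGrad s w g x).differentiableAt

theorem inner_fderiv_expInnerGrad (x v u : E) :
    ⟪fderiv ℝ (expInnerGrad s w g) x v, u⟫ =
      ∑ p ∈ s, w p * exp ⟪g p, x⟫ * (⟪g p, v⟫ * ⟪g p, u⟫) := by
  rw [(hasFDerivAt_expInnerGrad s w g x).fderiv]
  simp [sum_inner, inner_smul_left, mul_assoc]

theorem inner_fderiv_expInnerGrad_comm (x v u : E) :
    ⟪fderiv ℝ (expInnerGrad s w g) x v, u⟫ = ⟪v, fderiv ℝ (expInnerGrad s w g) x u⟫ := by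
  rw [real_inner_comm _ v, inner_fderiv_expInnerGrad, inner_fderiv_expInnerGrad]
  simp only [mul_comm ⟪g _, v⟫]

theorem inner_fderiv_expInnerGrad_pos {s w} (hw : ∀ p ∈ s, 0 < w p) (x : E) {v : E}
    (hv : ∃ p ∈ s, ⟪g p, v⟫ ≠ 0) : 0 < ⟪fderiv ℝ (expInnerGrad s w g) x v, v⟫ := by
  rw [inner_fderiv_expInnerGrad]
  obtain ⟨p, hp, hpv⟩ := hv
  exact sum_pos' (fun q hq => mul_nonneg (mul_pos (hw q hq) (exp_pos _)).le (mul_self_nonneg _))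
    ⟨p, hp, mul_pos (mul_pos (hw p hp) (exp_pos _)) (mul_self_pos.2 hpv)⟩

end ExpInnerGrad

theorem eq_zero_of_forall_ne_add_eq_zero {α M : Type*} [Fintype α] [AddGroup M]
    (hα : 3 ≤ Fintype.card α) {a b : α → M} {k : α} (hbk : b k = 0)
    (hab : ∀ i j, i ≠ j → a i + b j = 0) : a = 0 ∧ b = 0 := by
  classical
  have ha : ∀ i, i ≠ k → a i = 0 := fun i hi => by simpa [hbk] using hab i k hi
  have hb : b = 0 := by
    funext j
    obtain ⟨i, -, hi⟩ := exists_mem_notMem_of_card_lt_card (s := {j, k}) (t := univ)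
      (by rw [card_univ]; exact card_le_two.trans_lt hα)
    rw [mem_insert, mem_singleton, not_or] at hi
    simpa [ha i hi.2] using hab i j hi.1
  refine ⟨funext fun i => ?_, hb⟩
  rcases ne_or_eq i k with hik | rfl
  · exact ha i hik
  · obtain ⟨j, hj⟩ := Fintype.exists_ne_of_one_lt_card (by omega) i
    simpa [hb] using hab i j hj.symm

abbrev ParamSpace (n : ℕ) := EuclideanSpace ℝ (Fin n ⊕ Fin (n - 1))

noncomputable def edgeVec (n : ℕ) (i j : Fin n) : ParamSpace n :=
  EuclideanSpace.single (Sum.inl i) 1 +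
    if h : (j : ℕ) < n - 1 then EuclideanSpace.single (Sum.inr ⟨j, h⟩) 1 else 0

section EdgeVec

variable {n : ℕ} (i j : Fin n)

theorem inner_edgeVec (x : ParamSpace n) :
    ⟪edgeVec n i j, x⟫ =
      x (Sum.inl i) + if h : (j : ℕ) < n - 1 then x (Sum.inr ⟨j, h⟩) else 0 := by
  rw [edgeVec, inner_add_left]
  split_ifs <;> simp [EuclideanSpace.inner_single_left]

theorem edgeVec_inl (k : Fin n) : edgeVec n i j (Sum.inl k) = if k = i then 1 else 0 := by
  by_cases h : (j : ℕ) < n - 1 <;> simp [edgeVec, h, PiLp.single_apply]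

theorem edgeVec_inr (k : Fin (n - 1)) :
    edgeVec n i j (Sum.inr k) = if j = Fin.castLE (Nat.sub_le n 1) k then 1 else 0 := by
  rw [edgeVec]
  by_cases h : (j : ℕ) < n - 1
  · simp [h, PiLp.single_apply, Fin.ext_iff, eq_comm]
  · have : (j : ℕ) ≠ k := by omega
    simp [h, Fin.ext_iff, this]

end EdgeVec

theorem eq_expInnerGrad_edgeVec {n : ℕ} (c : Fin n → Fin n → ℝ)
    (Φ : ParamSpace n → ParamSpace n)
    (hΦ₁ : ∀ (η : ParamSpace n) (i : Fin n),
      Φ η (Sum.inl i) = exp (η (Sum.inl i)) *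
        ∑ j ∈ univ.erase i,
          c i j * exp (if h : (j : ℕ) < n - 1 then η (Sum.inr ⟨j, h⟩) else 0))
    (hΦ₂ : ∀ (η : ParamSpace n) (j : Fin (n - 1)),
      Φ η (Sum.inr j) = exp (η (Sum.inr j)) *
        ∑ i ∈ univ.erase (Fin.castLE (Nat.sub_le n 1) j),
          c i (Fin.castLE (Nat.sub_le n 1) j) * exp (η (Sum.inl i))) :
    Φ = expInnerGrad univ.offDiag (fun p => c p.1 p.2) (fun p => edgeVec n p.1 p.2) := by
  funext η
  ext (i | j)
  · rw [hΦ₁, expInnerGrad, sum_finset_product _ univ (fun i => univ.erase i) (by simp [eq_comm])]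
    simp [edgeVec_inl, inner_edgeVec, exp_add, mul_sub, mul_sum, mul_left_comm]
  · rw [hΦ₂, expInnerGrad, sum_finset_product_right _ univ (fun j => univ.erase j) (by simp)]
    simp [edgeVec_inr, inner_edgeVec, exp_add, mul_sub, mul_sum, mul_assoc, mul_comm]

theorem exists_inner_edgeVec_ne_zero {n : ℕ} (hn : 3 ≤ n) {v : ParamSpace n} (hv : v ≠ 0) :
    ∃ p ∈ univ.offDiag, ⟪edgeVec n p.1 p.2, v⟫ ≠ 0 := by
  by_contra! h
  let b (j : Fin n) : ℝ := if h : (j : ℕ) < n - 1 then v (Sum.inr ⟨j, h⟩) else 0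
  obtain ⟨ha, hb⟩ := eq_zero_of_forall_ne_add_eq_zero (a := fun i => v (Sum.inl i)) (b := b)
    (k := ⟨n - 1, by omega⟩) (by simpa using hn) (by simp [b])
    (fun i j hij => by rw [← inner_edgeVec]; exact h (i, j) (by simpa using hij))
  apply hv
  ext (i | j)
  · exact congrFun ha i
  · simpa [b] using congrFun hb (Fin.castLE (Nat.sub_le n 1) j)

/-- The map `Φ` given by the local estimating equations for the degree
parameters (with `βₙ := 0`) is differentiable, and its Jacobian at every point
is symmetric and positive definite. -/
theorem jacobian_symm_posdef (n : ℕ) (hn : 3 ≤ n) (c : Fin n → Fin n → ℝ)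
    (hc : ∀ i j : Fin n, i ≠ j → 0 < c i j)
    (Φ : EuclideanSpace ℝ (Fin n ⊕ Fin (n - 1)) → EuclideanSpace ℝ (Fin n ⊕ Fin (n - 1)))
    (hΦ₁ : ∀ (η : EuclideanSpace ℝ (Fin n ⊕ Fin (n - 1))) (i : Fin n),
      Φ η (Sum.inl i) = Real.exp (η (Sum.inl i)) *
        ∑ j ∈ Finset.univ.erase i,
          c i j * Real.exp (if h : (j : ℕ) < n - 1 then η (Sum.inr ⟨j, h⟩) else 0))
    (hΦ₂ : ∀ (η : EuclideanSpace ℝ (Fin n ⊕ Fin (n - 1))) (j : Fin (n - 1)),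
      Φ η (Sum.inr j) = Real.exp (η (Sum.inr j)) *
        ∑ i ∈ Finset.univ.erase (Fin.castLE (Nat.sub_le n 1) j),
          c i (Fin.castLE (Nat.sub_le n 1) j) * Real.exp (η (Sum.inl i))) :
    Differentiable ℝ Φ ∧
    (∀ (η : EuclideanSpace ℝ (Fin n ⊕ Fin (n - 1)))
        (v u : EuclideanSpace ℝ (Fin n ⊕ Fin (n - 1))),
      ⟪fderiv ℝ Φ η v, u⟫ = ⟪v, fderiv ℝ Φ η u⟫) ∧
    (∀ (η : EuclideanSpace ℝ (Fin n ⊕ Fin (n - 1)))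
        (v : EuclideanSpace ℝ (Fin n ⊕ Fin (n - 1))), v ≠ 0 →
      0 < ⟪fderiv ℝ Φ η v, v⟫) := by
  obtain rfl := eq_expInnerGrad_edgeVec c Φ hΦ₁ hΦ₂
  have hw : ∀ p ∈ univ.offDiag, 0 < c p.1 p.2 := fun p hp => hc _ _ (mem_offDiag.1 hp).2.2
  exact ⟨differentiable_expInnerGrad _ _ _, inner_fderiv_expInnerGrad_comm _ _ _,
    fun η v hv => inner_fderiv_expInnerGrad_pos _ hw η (exists_inner_edgeVec_ne_zero hn hv)⟩
end

section
/- Let n ≥ 3, let a_i > 0 for i ∈ {1,…,n}, let b_j > 0 for j ∈ {1,…,n−1}, and let c_{ij} > 0 for all 1 ≤ i ≠ j ≤ n. Consider the system of 2n−1 equations in the unknowns (α_1,…,α_n, β_1,…,β_{n−1}) ∈ ℝ^{2n−1}, with the convention β_n := 0: exp(α_i) Σ_{j≠i} c_{ij} exp(β_j) = a_i for every i ∈ {1,…,n}, and exp(β_j) Σ_{i≠j} c_{ij} exp(α_i) = b_j for every j ∈ {1,…,n−1}. Then this system has at most one solution. -/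
/-!
Write `d = α - α'` and `v = β' - β` for the differences of two solutions. Comparing their
equations shows that `exp dᵢ` is a positively weighted average of the `exp vⱼ`, `j ≠ i`, and
that `exp (-vⱼ)` is one of the `exp (-dᵢ)`, `i ≠ j`, for every `j` but the last. By the
strict mean value property the maximum of all the `dᵢ, vⱼ` spreads from any node attaining it
to its neighbours in the bipartite graph `i — j` (`i ≠ j`), which is connected for `n ≥ 3`;
so it is attained at the last `v`, which vanishes. The same holds for the minimum, so all
differences are zero.
-/

open Real Finset

/-- `exp (A - A')` is the mean of the `exp (yⱼ - xⱼ)` with weights `wⱼ exp xⱼ`, so it can reach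
a bound `M` of the `yⱼ - xⱼ` only if all of them equal `M`. -/
theorem sub_eq_of_exp_mul_sum_eq {ι : Type*} {s : Finset ι} {w x y : ι → ℝ}
    (hw : ∀ j ∈ s, 0 < w j) {A A' M : ℝ}
    (heq : exp A * ∑ j ∈ s, w j * exp (x j) = exp A' * ∑ j ∈ s, w j * exp (y j))
    (hle : ∀ j ∈ s, y j - x j ≤ M) (hM : M ≤ A - A') :
    ∀ j ∈ s, y j - x j = M := by
  have hterm : ∀ j ∈ s, w j * exp (y j) ≤ exp M * (w j * exp (x j)) := fun j hj => by
    rw [mul_left_comm, ← exp_add]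
    gcongr
    · exact (hw j hj).le
    · linarith [hle j hj]
  have hsum : ∑ j ∈ s, w j * exp (y j) = exp (A - A') * ∑ j ∈ s, w j * exp (x j) := by
    rw [exp_sub, div_mul_eq_mul_div, heq, mul_div_cancel_left₀ _ (exp_pos A').ne']
  have hsum_eq : ∑ j ∈ s, w j * exp (y j) = ∑ j ∈ s, exp M * (w j * exp (x j)) := by
    refine le_antisymm (sum_le_sum hterm) ?_
    rw [← mul_sum, hsum]
    gcongr
    exact sum_nonneg fun j hj => (mul_pos (hw j hj) (exp_pos _)).le
  intro j hj
  have hj_eq := (sum_eq_sum_iff_of_le hterm).1 hsum_eq j hj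
  rw [mul_left_comm, ← exp_add, mul_right_inj' (hw j hj).ne', exp_eq_exp] at hj_eq
  linarith

/-- Connectivity of the bipartite graph `inl i — inr j` (`i ≠ j`) for `n ≥ 3`, even when paths
may not pass through `inr L`. -/
theorem propagate_to_inr {n : ℕ} (hn : 3 ≤ n) (L : Fin n) {P : Fin n ⊕ Fin n → Prop}
    (hrow : ∀ i j, j ≠ i → P (.inl i) → P (.inr j))
    (hcol : ∀ i j, j ≠ L → i ≠ j → P (.inr j) → P (.inl i))
    (z : Fin n ⊕ Fin n) (hz : P z) : P (.inr L) := by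
  have from_inr : ∀ j, j ≠ L → P (.inr j) → P (.inr L) := by
    intro j hjL hj
    obtain ⟨k, -, hk⟩ := exists_mem_notMem_of_card_lt_card
      (s := {j, L}) (t := univ) (by simpa using (card_le_two).trans_lt (by omega))
    simp only [mem_insert, mem_singleton, not_or] at hk
    exact hrow k L (Ne.symm hk.2) (hcol k j hjL hk.1 hj)
  rcases z with i | j
  · by_cases hiL : i = L
    · have : Nontrivial (Fin n) := Fin.nontrivial_iff_two_le.2 (by omega)
      obtain ⟨j, hjL⟩ := exists_ne L
      exact from_inr j hjL (hrow i j (hiL ▸ hjL) hz)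
    · exact hrow i L (Ne.symm hiL) hz
  · by_cases hjL : j = L
    · exact hjL ▸ hz
    · exact from_inr j hjL hz

def solutionDiff {n : ℕ} (α α' β β' : Fin n → ℝ) : Fin n ⊕ Fin n → ℝ :=
  Sum.elim (α - α') (β' - β)

theorem solutionDiff_swap {n : ℕ} (α α' β β' : Fin n → ℝ) :
    solutionDiff α' α β' β = -solutionDiff α α' β β' := by
  ext (i | j) <;> simp [solutionDiff]

theorem solutionDiff_le_inr {n : ℕ} (hn : 3 ≤ n) (L : Fin n) {c : Fin n → Fin n → ℝ}
    (hc : ∀ i j : Fin n, i ≠ j → 0 < c i j) {α α' β β' : Fin n → ℝ}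
    (hrow : ∀ i, exp (α i) * ∑ j ∈ univ.erase i, c i j * exp (β j) =
      exp (α' i) * ∑ j ∈ univ.erase i, c i j * exp (β' j))
    (hcol : ∀ j, j ≠ L → exp (β' j) * ∑ i ∈ univ.erase j, c i j * exp (α' i) =
      exp (β j) * ∑ i ∈ univ.erase j, c i j * exp (α i))
    (z : Fin n ⊕ Fin n) : solutionDiff α α' β β' z ≤ solutionDiff α α' β β' (.inr L) := by
  set f := solutionDiff α α' β β'
  have : Nonempty (Fin n ⊕ Fin n) := ⟨.inr L⟩
  obtain ⟨y, hy⟩ := Finite.exists_max f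
  suffices f (.inr L) = f y from this ▸ hy z
  refine propagate_to_inr hn L (P := fun z => f z = f y) ?_ ?_ y rfl
  · intro i j hji hi
    exact sub_eq_of_exp_mul_sum_eq (fun k hk => hc i k (ne_of_mem_erase hk).symm) (hrow i)
      (fun k _ => hy (.inr k)) hi.ge j (mem_erase.2 ⟨hji, mem_univ j⟩)
  · intro i j hjL hij hj
    exact sub_eq_of_exp_mul_sum_eq (fun k hk => hc k j (ne_of_mem_erase hk)) (hcol j hjL)
      (fun k _ => hy (.inl k)) hj.ge i (mem_erase.2 ⟨hij, mem_univ i⟩)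

/-- Uniqueness of the solution of the exponential system arising from the local
estimating equations for the degree parameters (normalization `βₙ := 0`):
the system `exp(αᵢ) Σ_{j≠i} c_{ij} exp(βⱼ) = aᵢ` (for all `i`) and
`exp(βⱼ) Σ_{i≠j} c_{ij} exp(αᵢ) = bⱼ` (for `j = 1,…,n-1`) has at most one
solution. -/
theorem exponential_system_unique (n : ℕ) (hn : 3 ≤ n)
    (a : Fin n → ℝ)
    (b : Fin n → ℝ)
    (c : Fin n → Fin n → ℝ) (hc : ∀ i j : Fin n, i ≠ j → 0 < c i j)
    (α α' β β' : Fin n → ℝ)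
    (hβn : β ⟨n - 1, by omega⟩ = 0) (hβ'n : β' ⟨n - 1, by omega⟩ = 0)
    (h1 : ∀ i : Fin n,
      Real.exp (α i) * ∑ j ∈ Finset.univ.erase i, c i j * Real.exp (β j) = a i)
    (h2 : ∀ j : Fin n, (j : ℕ) < n - 1 →
      Real.exp (β j) * ∑ i ∈ Finset.univ.erase j, c i j * Real.exp (α i) = b j)
    (h1' : ∀ i : Fin n,
      Real.exp (α' i) * ∑ j ∈ Finset.univ.erase i, c i j * Real.exp (β' j) = a i)
    (h2' : ∀ j : Fin n, (j : ℕ) < n - 1 →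
      Real.exp (β' j) * ∑ i ∈ Finset.univ.erase j, c i j * Real.exp (α' i) = b j) :
    α = α' ∧ β = β' := by
  set L : Fin n := ⟨n - 1, by omega⟩
  have hlt : ∀ j : Fin n, j ≠ L → (j : ℕ) < n - 1 := fun j hj => by
    have : (j : ℕ) ≠ n - 1 := fun h => hj (Fin.ext h)
    omega
  have hrow i := (h1 i).trans (h1' i).symm
  have hcol j (hj : j ≠ L) := (h2' j (hlt j hj)).trans (h2 j (hlt j hj)).symm
  have hL : solutionDiff α α' β β' (.inr L) = 0 := by simp [solutionDiff, hβn, hβ'n, L]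
  have hzero z : solutionDiff α α' β β' z = 0 := by
    have hle := solutionDiff_le_inr hn L hc hrow hcol z
    have hge := solutionDiff_le_inr hn L hc (fun i => (hrow i).symm)
      (fun j hj => (hcol j hj).symm) z
    rw [solutionDiff_swap, Pi.neg_apply, Pi.neg_apply, neg_le_neg_iff] at hge
    linarith
  constructor <;> ext k
  · simpa [solutionDiff, sub_eq_zero] using hzero (.inl k)
  · simpa [solutionDiff, sub_eq_zero, eq_comm] using hzero (.inr k)
end
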